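/- Let B ⊆ ℤ^d be a finite set of integer vectors and k a positive integer. Then there exists a convex set C ⊆ ℝ^d such that: (1) C = C' + L^⊥ where L ⊆ ℝ^d is a linear subspace and C' ⊆ L is an affine image of a section of the cone of r×r symmetric PSD matrices by an affine subspace with r ≤ C(d + k + 2, k); (2) B ⊆ C; and (3) for every linear function ℓ(x) = a₁x₁ + ⋯ + a_d x_d with integer coefficients satisfying max_{x∈B} ℓ(x) − min_{x∈B} ℓ(x) ≤ k, one has max_{x∈B} ℓ(x) = max_{x∈C} ℓ(x). -/

import Mathlib

/-!
Lift a point `x` to its moment matrix `v(x) v(x)ᵀ`, where `v(x)` lists the monomials of degree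
at most `k` in `x`, and let `C` be the image, under reading off the linear entries, of the positive
semidefinite matrices in the affine span of the lifted points of `B` (with `L` the whole space).

If `ℓ` is integral on `B` with `max ℓ - min ℓ ≤ k` and `c = max_B ℓ`, then `c - ℓ` takes values
`n ∈ {0, …, k}` on `B`, and there `n = ∑ⱼ j Lⱼ(n)²` for the Lagrange basis `Lⱼ` of the nodes
`0, …, k`. Each `Lⱼ(c - ℓ x)` has degree `k`, hence is a linear form `cⱼ ⬝ᵥ v(x)`. So the affine
function `c - ℓ` of the matrix agrees with `M ↦ ∑ⱼ j cⱼᵀ M cⱼ` on the lifted points, hence on their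
affine span, where the latter is nonnegative on positive semidefinite matrices.
-/

open Finset Matrix

theorem convex_setOf_posSemidef (n : Type*) : Convex ℝ {M : Matrix n n ℝ | M.PosSemidef} :=
  fun _ hM _ hN _ _ ha hb _ => (hM.smul ha).add (hN.smul hb)

section MomentSpectrahedron

variable {X n : Type*} [Fintype n]

def quadFormAt (c : n → ℝ) : Matrix n n ℝ →ₗ[ℝ] ℝ where
  toFun M := c ⬝ᵥ M *ᵥ c
  map_add' M N := by simp only [add_mulVec, dotProduct_add]
  map_smul' a M := by simp only [smul_mulVec, dotProduct_smul, RingHom.id_apply]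

theorem posSemidef_vecMulVec_self (u : n → ℝ) : (vecMulVec u u).PosSemidef := by
  simpa using posSemidef_vecMulVec_self_star u

theorem quadFormAt_vecMulVec_self (c u : n → ℝ) :
    quadFormAt c (vecMulVec u u) = (c ⬝ᵥ u) ^ 2 := by
  simp [quadFormAt, vecMulVec_mulVec, dotProduct_comm u c, sq]

theorem nonneg_of_mem_affineSpan_vecMulVec {ι : Type*} (v : X → n → ℝ) (S : Set X)
    (q : Matrix n n ℝ →ᵃ[ℝ] ℝ) (s : Finset ι) (w : ι → ℝ) (hw : ∀ j ∈ s, 0 ≤ w j)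
    (c : ι → n → ℝ) (hq : ∀ x ∈ S, q (vecMulVec (v x) (v x)) = ∑ j ∈ s, w j * (c j ⬝ᵥ v x) ^ 2)
    {M : Matrix n n ℝ} (hMS : M ∈ affineSpan ℝ ((fun x => vecMulVec (v x) (v x)) '' S))
    (hM : M.PosSemidef) : 0 ≤ q M := by
  let Q : Matrix n n ℝ →ₗ[ℝ] ℝ := ∑ j ∈ s, w j • quadFormAt (c j)
  have hqQ : Set.EqOn q Q.toAffineMap ((fun x => vecMulVec (v x) (v x)) '' S) := by
    rintro _ ⟨x, hx, rfl⟩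
    simp [Q, hq x hx, quadFormAt_vecMulVec_self]
  rw [AffineMap.eqOn_affineSpan hqQ hMS]
  simp only [LinearMap.coe_toAffineMap, Q, LinearMap.sum_apply, LinearMap.smul_apply, smul_eq_mul]
  exact sum_nonneg fun j hj =>
    mul_nonneg (hw j hj) (by simpa [quadFormAt] using hM.dotProduct_mulVec_nonneg (c j))

end MomentSpectrahedron

section HomogeneousForms

variable {ι : Type*}

def symMonomial {k : ℕ} (m : Sym ι k) (y : ι → ℝ) : ℝ := (m.1.map y).prod

theorem symMonomial_cons {k : ℕ} (i : ι) (m : Sym ι k) (y : ι → ℝ) :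
    symMonomial (i ::ₛ m) y = y i * symMonomial m y := by
  simp [symMonomial, Sym.coe_cons]

variable (ι) in
def homogeneousForms (k : ℕ) : Submodule ℝ ((ι → ℝ) → ℝ) :=
  Submodule.span ℝ (Set.range (symMonomial (ι := ι) (k := k)))

theorem const_one_mem_homogeneousForms_zero : (fun _ => 1) ∈ homogeneousForms ι 0 :=
  Submodule.subset_span ⟨Sym.nil, by funext y; simp [symMonomial]⟩

theorem dotProduct_mul_mem_homogeneousForms [Fintype ι] {k : ℕ} (u : ι → ℝ) {f : (ι → ℝ) → ℝ}
    (hf : f ∈ homogeneousForms ι k) : (fun y => u ⬝ᵥ y * f y) ∈ homogeneousForms ι (k + 1) := by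
  have hmul : homogeneousForms ι k
      ≤ (homogeneousForms ι (k + 1)).comap (LinearMap.mulLeft ℝ fun y => u ⬝ᵥ y) := by
    refine Submodule.span_le.mpr ?_
    rintro _ ⟨m, rfl⟩
    have : (fun y => u ⬝ᵥ y) * symMonomial m = ∑ i, u i • symMonomial (i ::ₛ m) := by
      funext y
      simp [symMonomial_cons, dotProduct, sum_mul, mul_assoc]
    simp only [SetLike.mem_coe, Submodule.mem_comap, LinearMap.mulLeft_apply, this]
    exact sum_mem fun i _ => Submodule.smul_mem _ _ (Submodule.subset_span ⟨_, rfl⟩)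
  exact hmul hf

theorem prod_dotProduct_mem_homogeneousForms [Fintype ι] {α : Type*} (s : Finset α)
    (u : α → ι → ℝ) :
    (fun y => ∏ t ∈ s, u t ⬝ᵥ y) ∈ homogeneousForms ι #s := by
  classical
  induction s using Finset.induction_on with
  | empty => simpa using const_one_mem_homogeneousForms_zero
  | insert t s hts ih =>
    simpa only [prod_insert hts, card_insert_of_notMem hts]
      using dotProduct_mul_mem_homogeneousForms (u t) ih

theorem exists_dotProduct_eq_of_mem_homogeneousForms [Fintype ι] [DecidableEq ι] {k : ℕ}
    {n : Type*} [Fintype n] (e : n ≃ Sym ι k) {f : (ι → ℝ) → ℝ} (hf : f ∈ homogeneousForms ι k) :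
    ∃ c : n → ℝ, ∀ y, f y = c ⬝ᵥ fun p => symMonomial (e p) y := by
  obtain ⟨c, hc⟩ := (Submodule.mem_span_range_iff_exists_fun ℝ).mp hf
  refine ⟨c ∘ e, fun y => ?_⟩
  rw [← hc]
  simp only [Finset.sum_apply, Pi.smul_apply, smul_eq_mul, dotProduct, Function.comp_apply]
  exact (e.sum_comp fun m => c m * symMonomial m y).symm

end HomogeneousForms

namespace Lagrange

open Polynomial

variable {F ι : Type*} [Field F] [DecidableEq ι]

theorem eval_basis (s : Finset ι) (v : ι → F) (j : ι) (t : F) :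
    (Lagrange.basis s v j).eval t = ∏ i ∈ s.erase j, (v j - v i)⁻¹ * (t - v i) := by
  simp [Lagrange.basis, basisDivisor, eval_prod]

theorem sum_mul_eval_basis_sq {s : Finset ι} {v : ι → F} (hvs : Set.InjOn v s) {i : ι}
    (hi : i ∈ s) (r : ι → F) :
    ∑ j ∈ s, r j * (Lagrange.basis s v j).eval (v i) ^ 2 = r i := by
  rw [sum_eq_single i]
  · simp [eval_basis_self hvs hi]
  · intro j _ hji
    simp [eval_basis_of_ne hji hi]
  · exact fun h => absurd hi h

end Lagrange

theorem exists_mem_range_sup'_sub_eq_natCast {X : Type*} {B : Finset X} (hB : B.Nonempty)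
    {f : X → ℝ} {k : ℕ} (hf : ∀ x ∈ B, ∃ m : ℤ, f x = m) (hk : B.sup' hB f - B.inf' hB f ≤ k)
    {x : X} (hx : x ∈ B) : ∃ n ∈ range (k + 1), B.sup' hB f - f x = n := by
  obtain ⟨b, hb, hbf⟩ := exists_mem_eq_sup' hB f
  obtain ⟨mb, hmb⟩ := hf b hb
  obtain ⟨mx, hmx⟩ := hf x hx
  have hlow : f x ≤ B.sup' hB f := le_sup' f hx
  have hup : B.sup' hB f - f x ≤ k := (sub_le_sub_left (inf'_le f hx) _).trans hk
  rw [hbf, hmb, hmx] at hlow hup ⊢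
  have h0 : 0 ≤ mb - mx := by exact_mod_cast sub_nonneg.mpr hlow
  have hk' : mb - mx ≤ k := by exact_mod_cast hup
  refine ⟨(mb - mx).toNat, mem_range.mpr (by omega), ?_⟩
  exact_mod_cast (Int.toNat_of_nonneg h0).symm

section MomentLift

variable {d k r : ℕ}

def homogenize (x : EuclideanSpace ℝ (Fin d)) : Fin (d + 1) → ℝ := Fin.snoc x.ofLp 1

theorem snoc_dotProduct_homogenize (a : Fin d → ℝ) (b : ℝ) (x : EuclideanSpace ℝ (Fin d)) :
    Fin.snoc a b ⬝ᵥ homogenize x = ∑ i, a i * x i + b := by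
  simp [dotProduct, Fin.sum_univ_castSucc, homogenize]

/-- The monomials of degree `k` in `(x, 1)`, i.e. those of degree at most `k` in `x`. -/
def momentVector (e : Fin r ≃ Sym (Fin (d + 1)) k) (x : EuclideanSpace ℝ (Fin d)) :
    Fin r → ℝ :=
  fun p => symMonomial (e p) (homogenize x)

theorem exists_dotProduct_momentVector_eq_prod (e : Fin r ≃ Sym (Fin (d + 1)) k) {α : Type*}
    (s : Finset α) (hs : #s = k) (a : α → Fin d → ℝ) (b : α → ℝ) :
    ∃ c : Fin r → ℝ, ∀ x, ∏ t ∈ s, (∑ i, a t i * x i + b t) = c ⬝ᵥ momentVector e x := by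
  have hmem := prod_dotProduct_mem_homogeneousForms s fun t => Fin.snoc (a t) (b t)
  rw [hs] at hmem
  obtain ⟨c, hc⟩ := exists_dotProduct_eq_of_mem_homogeneousForms e hmem
  refine ⟨c, fun x => ?_⟩
  simp only [← snoc_dotProduct_homogenize]
  exact hc (homogenize x)

variable (d k) in
def constMonomial : Sym (Fin (d + 1)) k := Sym.replicate k (Fin.last d)

def coordMonomial (hk : 0 < k) (i : Fin d) : Sym (Fin (d + 1)) k :=
  ⟨i.castSucc ::ₘ Multiset.replicate (k - 1) (Fin.last d), by simp; omega⟩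

theorem symMonomial_constMonomial_homogenize (x : EuclideanSpace ℝ (Fin d)) :
    symMonomial (constMonomial d k) (homogenize x) = 1 := by
  simp [symMonomial, constMonomial, Sym.coe_replicate, homogenize]

theorem symMonomial_coordMonomial_homogenize (hk : 0 < k) (i : Fin d)
    (x : EuclideanSpace ℝ (Fin d)) : symMonomial (coordMonomial hk i) (homogenize x) = x i := by
  simp [symMonomial, coordMonomial, homogenize]

def momentProjection (e : Fin r ≃ Sym (Fin (d + 1)) k) (hk : 0 < k) :
    Matrix (Fin r) (Fin r) ℝ →ₗ[ℝ] EuclideanSpace ℝ (Fin d) where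
  toFun M := WithLp.toLp 2 fun i => M (e.symm (coordMonomial hk i)) (e.symm (constMonomial d k))
  map_add' _ _ := rfl
  map_smul' _ _ := rfl

theorem momentProjection_vecMulVec_momentVector (e : Fin r ≃ Sym (Fin (d + 1)) k) (hk : 0 < k)
    (x : EuclideanSpace ℝ (Fin d)) :
    momentProjection e hk (vecMulVec (momentVector e x) (momentVector e x)) = x := by
  ext i
  change vecMulVec (momentVector e x) (momentVector e x) _ _ = x i
  simp [momentVector, vecMulVec_apply, symMonomial_constMonomial_homogenize,
    symMonomial_coordMonomial_homogenize]

theorem sum_mul_momentProjection_le (e : Fin r ≃ Sym (Fin (d + 1)) k) (hk : 0 < k)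
    {S : Set (EuclideanSpace ℝ (Fin d))} (a : Fin d → ℝ) (c : ℝ)
    (hS : ∀ x ∈ S, ∃ n ∈ range (k + 1), c - ∑ i, a i * x i = n) {M : Matrix (Fin r) (Fin r) ℝ}
    (hMS : M ∈ affineSpan ℝ ((fun x => vecMulVec (momentVector e x) (momentVector e x)) '' S))
    (hM : M.PosSemidef) : ∑ i, a i * momentProjection e hk M i ≤ c := by
  classical
  have hbasis : ∀ j ∈ range (k + 1), ∃ cj : Fin r → ℝ, ∀ x,
      (Lagrange.basis (range (k + 1)) (Nat.cast : ℕ → ℝ) j).eval (c - ∑ i, a i * x i)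
        = cj ⬝ᵥ momentVector e x := by
    intro j hj
    obtain ⟨cj, hcj⟩ := exists_dotProduct_momentVector_eq_prod e ((range (k + 1)).erase j)
      (by simp [card_erase_of_mem hj]) (fun (i : ℕ) l => -(((j : ℝ) - i)⁻¹ * a l))
      (fun (i : ℕ) => ((j : ℝ) - i)⁻¹ * (c - i))
    refine ⟨cj, fun x => ?_⟩
    rw [Lagrange.eval_basis, ← hcj]
    refine prod_congr rfl fun i _ => ?_
    simp only [neg_mul, sum_neg_distrib, mul_assoc, ← mul_sum]
    ring
  choose! cj hcj using hbasis
  let q : Matrix (Fin r) (Fin r) ℝ →ᵃ[ℝ] ℝ :=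
    (AffineMap.const ℝ _ c - (innerₛₗ ℝ (WithLp.toLp 2 a)).toAffineMap).comp
      (momentProjection e hk).toAffineMap
  have hq : ∀ M, q M = c - ∑ i, a i * momentProjection e hk M i := fun M => by
    simp [q, PiLp.inner_apply, mul_comm]
  have hcert : ∀ x ∈ S, q (vecMulVec (momentVector e x) (momentVector e x))
      = ∑ j ∈ range (k + 1), (j : ℝ) * (cj j ⬝ᵥ momentVector e x) ^ 2 := by
    intro x hx
    obtain ⟨n, hn, hxn⟩ := hS x hx
    rw [hq, momentProjection_vecMulVec_momentVector, hxn,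
      ← Lagrange.sum_mul_eval_basis_sq Nat.cast_injective.injOn hn Nat.cast]
    refine sum_congr rfl fun j hj => ?_
    rw [← hxn, hcj j hj]
  have := nonneg_of_mem_affineSpan_vecMulVec (momentVector e) S q (range (k + 1)) Nat.cast
    (fun j _ => Nat.cast_nonneg j) cj hcert hMS hM
  linarith [hq M]

end MomentLift

open Pointwise

theorem stmt13 (d k : ℕ) (hk : 0 < k) (B : Finset (EuclideanSpace ℝ (Fin d)))
    (hBne : B.Nonempty) (hint : ∀ x ∈ B, ∀ i : Fin d, ∃ m : ℤ, x i = (m : ℝ)) :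
    ∃ (C C' : Set (EuclideanSpace ℝ (Fin d)))
      (L : Submodule ℝ (EuclideanSpace ℝ (Fin d))),
      Convex ℝ C ∧
      C = C' + (Lᗮ : Set (EuclideanSpace ℝ (Fin d))) ∧
      C' ⊆ (L : Set (EuclideanSpace ℝ (Fin d))) ∧
      (∃ r : ℕ, r ≤ (d + k + 2).choose k ∧
        ∃ (A : AffineSubspace ℝ (Matrix (Fin r) (Fin r) ℝ))
          (T : Matrix (Fin r) (Fin r) ℝ →ᵃ[ℝ] EuclideanSpace ℝ (Fin d)),
          C' = T '' ((A : Set (Matrix (Fin r) (Fin r) ℝ)) ∩ {M | M.PosSemidef})) ∧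
      ↑B ⊆ C ∧
      ∀ a : Fin d → ℤ,
        B.sup' hBne (fun x => ∑ i, (a i : ℝ) * x i)
            - B.inf' hBne (fun x => ∑ i, (a i : ℝ) * x i) ≤ (k : ℝ) →
        IsGreatest ((fun x : EuclideanSpace ℝ (Fin d) => ∑ i, (a i : ℝ) * x i) '' C)
          (B.sup' hBne (fun x => ∑ i, (a i : ℝ) * x i)) := by
  classical
  let e : Fin (Fintype.card (Sym (Fin (d + 1)) k)) ≃ Sym (Fin (d + 1)) k :=
    (Fintype.equivFin _).symm
  let A := affineSpan ℝ ((fun x => vecMulVec (momentVector e x) (momentVector e x)) '' B)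
  let T := (momentProjection e hk).toAffineMap
  have hBC : ↑B ⊆ T '' (A ∩ {M | M.PosSemidef}) := fun x hx =>
    ⟨_, ⟨subset_affineSpan ℝ _ ⟨x, hx, rfl⟩, posSemidef_vecMulVec_self _⟩,
      momentProjection_vecMulVec_momentVector e hk x⟩
  have hcard : Fintype.card (Sym (Fin (d + 1)) k) ≤ (d + k + 2).choose k := by
    rw [Sym.card_sym_eq_multichoose, Nat.multichoose_eq, Fintype.card_fin]
    exact Nat.choose_le_choose k (by omega)
  refine ⟨_, _, ⊤, (A.convex.inter (convex_setOf_posSemidef _)).affine_image T, by simp,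
    fun _ _ => trivial, ⟨_, hcard, A, T, rfl⟩, hBC, fun a ha => ⟨?_, ?_⟩⟩
  · obtain ⟨b, hb, hbmax⟩ := exists_mem_eq_sup' hBne fun x => ∑ i, (a i : ℝ) * x i
    exact ⟨b, hBC hb, hbmax.symm⟩
  · have hBint : ∀ x ∈ B, ∃ m : ℤ, ∑ i, (a i : ℝ) * x i = m := fun x hx => by
      choose m hm using hint x hx
      exact ⟨∑ i, a i * m i, by push_cast; simp only [hm]⟩
    rintro _ ⟨_, ⟨M, ⟨hMA, hM⟩, rfl⟩, rfl⟩
    exact sum_mul_momentProjection_le e hk _ _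
      (fun x hx => exists_mem_range_sup'_sub_eq_natCast hBne hBint ha hx) hMA hM
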